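/- arXiv:2503.03923 — 3 statements merged into one kernel-verified Lean document; each statement's English description precedes it below -/
import Mathlib

section
/- Let η ∈ (0, 1/2) and let C > 0. Let G and G' be graphs on vertex set [n] (n ≥ 1) that agree on all edges not incident to a set S ⊆ [n] with |S| ≤ 2ηn. For a graph H, write d(H) = 2·(number of edges of H)/n, and for T ⊆ [n] write e_H(T) for the number of edges of H inside T, e_H(T, T̄) for the number of edges of H between T and its complement, and N(T) = binom(|T|,2) + |T|(n−|T|). Suppose d(G) ≥ 1 and that for each H ∈ {G, G'} and every T ⊆ [n] with |T| ≤ 2ηn one has |e_H(T) + e_H(T, T̄) − (d(H)/n)·N(T)| ≤ C·(√(log(1/η))·√(d(H)) + log(1/η))·ηn. Then there is a constant K depending only on C such that |d(G) − d(G')| ≤ K·( η·√(log(1/η))·√(d(G))/(1−2η)⁴ + η·log(1/η)/(1−2η)² ). -/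
open MeasureTheory Finset

namespace ER

abbrev Edge (n : ℕ) := {q : Fin n × Fin n // q.1 < q.2}

/-- The Erdős–Rényi measure `G(n, d/n)`: i.i.d. Bernoulli(d/n) indicators on pairs i < j. -/
noncomputable def erMeasure (n : ℕ) (d : ℝ) : Measure (Edge n → Bool) :=
  Measure.pi fun _ => (PMF.bernoulli (min (Real.toNNReal (d / n)) 1) (min_le_right _ _)).toMeasure

/-- Adjacency matrix entry of the graph encoded by `ω`. -/
noncomputable def adj {n : ℕ} (ω : Edge n → Bool) (i j : Fin n) : ℝ :=
  if h : i < j then (if ω ⟨(i, j), h⟩ then 1 else 0)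
  else if h' : j < i then (if ω ⟨(j, i), h'⟩ then 1 else 0)
  else 0

/-- Average degree `d(A) = (1/n) ∑_{i,j} A_{ij}`. -/
noncomputable def avgDeg {n : ℕ} (ω : Edge n → Bool) : ℝ :=
  (1 / n) * ∑ i, ∑ j, adj ω i j

/-- Degree of vertex `i`. -/
noncomputable def deg {n : ℕ} (ω : Edge n → Bool) (i : Fin n) : ℝ :=
  ∑ j, adj ω i j

/-- Number of edges inside `S`. -/
noncomputable def eIn {n : ℕ} (ω : Edge n → Bool) (S : Finset (Fin n)) : ℝ :=
  ∑ i ∈ S, ∑ j ∈ S, if i < j then adj ω i j else 0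

/-- Number of edges between `S` and its complement. -/
noncomputable def eCut {n : ℕ} (ω : Edge n → Bool) (S : Finset (Fin n)) : ℝ :=
  ∑ i ∈ S, ∑ j ∈ Sᶜ, adj ω i j


/-- `N(T) = binom(|T|,2) + |T|(n - |T|)`. -/
noncomputable def Nfun (n : ℕ) (T : Finset (Fin n)) : ℝ :=
  (T.card.choose 2 : ℝ) + (T.card : ℝ) * ((n : ℝ) - (T.card : ℝ))

/-! Take `T = S` in the goodness condition. Since `G` and `G'` agree inside `Sᶜ`, the difference
of their edge counts is the difference of `e(S) + e(S, Sᶜ)`, and goodness pins each of these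
down to `(d / n) N(S)` up to an error `ε(d) η n`. Comparing gives
`|d - d'| (n / 2 - N(S) / n) ≤ (ε(d) + ε(d')) η n`, and `n / 2 - N(S) / n ≥ (1 - 2η)² n / 2`.
The resulting bound still involves `√d'` through `ε(d')`; since `d ≥ 1` it yields
`√d' ≤ √d + O(1)`, which closes the estimate. -/

section Graph

variable {n : ℕ}

lemma adj_nonneg (ω : Edge n → Bool) (i j : Fin n) : 0 ≤ adj ω i j := by
  unfold adj; split_ifs <;> norm_num

lemma adj_comm (ω : Edge n → Bool) (i j : Fin n) : adj ω i j = adj ω j i := by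
  rcases lt_trichotomy i j with h | rfl | h
  · simp [adj, h, h.asymm]
  · rfl
  · simp [adj, h, h.asymm]

lemma adj_self (ω : Edge n → Bool) (i : Fin n) : adj ω i i = 0 := by
  simp [adj]

lemma adj_congr {G G' : Edge n → Bool} {S : Finset (Fin n)}
    (hGG' : ∀ q : Edge n, q.1.1 ∉ S → q.1.2 ∉ S → G q = G' q)
    {i j : Fin n} (hi : i ∉ S) (hj : j ∉ S) : adj G i j = adj G' i j := by
  unfold adj
  by_cases h : i < j
  · simp only [dif_pos h, hGG' ⟨(i, j), h⟩ hi hj]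
  by_cases h' : j < i
  · simp only [dif_neg h, dif_pos h', hGG' ⟨(j, i), h'⟩ hj hi]
  simp only [dif_neg h, dif_neg h']

lemma avgDeg_nonneg (ω : Edge n → Bool) : 0 ≤ avgDeg ω :=
  mul_nonneg (by positivity) (sum_nonneg fun i _ => sum_nonneg fun j _ => adj_nonneg ω i j)

lemma sum_sum_adj_eq_two_mul_eIn (ω : Edge n → Bool) (T : Finset (Fin n)) :
    ∑ i ∈ T, ∑ j ∈ T, adj ω i j = 2 * eIn ω T := by
  have hsplit : ∀ i j,
      adj ω i j = (if i < j then adj ω i j else 0) + (if j < i then adj ω j i else 0) := by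
    intro i j
    rcases lt_trichotomy i j with h | rfl | h
    · simp [h, h.asymm]
    · simp [adj_self]
    · simp [h, h.asymm, adj_comm ω i j]
  have hswap : ∑ i ∈ T, ∑ j ∈ T, (if j < i then adj ω j i else 0) = eIn ω T := sum_comm
  rw [sum_congr rfl fun i _ => sum_congr rfl fun j _ => hsplit i j]
  simp only [sum_add_distrib, hswap, eIn]
  ring

lemma sum_sum_compl_adj_eq_eCut (ω : Edge n → Bool) (S : Finset (Fin n)) :
    ∑ i ∈ Sᶜ, ∑ j ∈ S, adj ω i j = eCut ω S := by
  rw [sum_comm]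
  exact sum_congr rfl fun i _ => sum_congr rfl fun j _ => adj_comm ω j i

lemma sum_sum_adj_eq (ω : Edge n → Bool) (S : Finset (Fin n)) :
    ∑ i, ∑ j, adj ω i j = 2 * (eIn ω S + eCut ω S) + 2 * eIn ω Sᶜ := by
  have hrow : ∀ i, ∑ j, adj ω i j = ∑ j ∈ S, adj ω i j + ∑ j ∈ Sᶜ, adj ω i j :=
    fun i => (sum_add_sum_compl S _).symm
  rw [← sum_add_sum_compl S]
  simp only [hrow, sum_add_distrib, sum_sum_adj_eq_two_mul_eIn, sum_sum_compl_adj_eq_eCut]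
  rw [eCut]
  ring

lemma eIn_compl_congr {G G' : Edge n → Bool} {S : Finset (Fin n)}
    (hGG' : ∀ q : Edge n, q.1.1 ∉ S → q.1.2 ∉ S → G q = G' q) :
    eIn G Sᶜ = eIn G' Sᶜ := by
  refine sum_congr rfl fun i hi => sum_congr rfl fun j hj => ?_
  rw [adj_congr hGG' (mem_compl.mp hi) (mem_compl.mp hj)]

lemma mul_avgDeg_sub_avgDeg (hn : n ≠ 0) {G G' : Edge n → Bool} {S : Finset (Fin n)}
    (hGG' : ∀ q : Edge n, q.1.1 ∉ S → q.1.2 ∉ S → G q = G' q) :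
    n * (avgDeg G - avgDeg G') = 2 * ((eIn G S + eCut G S) - (eIn G' S + eCut G' S)) := by
  have hn' : (n : ℝ) ≠ 0 := Nat.cast_ne_zero.mpr hn
  simp only [avgDeg, mul_sub, ← mul_assoc, mul_one_div_cancel hn', one_mul, sum_sum_adj_eq _ S,
    eIn_compl_congr hGG']
  ring

lemma half_sq_sub_Nfun (T : Finset (Fin n)) :
    (n : ℝ) ^ 2 / 2 - Nfun n T = (((n : ℝ) - T.card) ^ 2 + T.card) / 2 := by
  rw [Nfun, Nat.cast_choose_two]
  ring

lemma abs_avgDeg_sub_le (hn : n ≠ 0) {η β β' : ℝ} (hη : η < 1 / 2)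
    {G G' : Edge n → Bool} {S : Finset (Fin n)} (hS : (S.card : ℝ) ≤ 2 * η * n)
    (hGG' : ∀ q : Edge n, q.1.1 ∉ S → q.1.2 ∉ S → G q = G' q)
    (hG : |eIn G S + eCut G S - avgDeg G / n * Nfun n S| ≤ β)
    (hG' : |eIn G' S + eCut G' S - avgDeg G' / n * Nfun n S| ≤ β') :
    |avgDeg G - avgDeg G'| ≤ 2 * (β + β') / ((1 - 2 * η) ^ 2 * n) := by
  have hn0 : (0 : ℝ) < n := Nat.cast_pos.mpr (Nat.pos_of_ne_zero hn)
  have hγ : 0 < 1 - 2 * η := by linarith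
  have hγn : 0 < (1 - 2 * η) * n := mul_pos hγ hn0
  have hmargin : ((1 - 2 * η) * n) ^ 2 / 2 ≤ (n : ℝ) ^ 2 / 2 - Nfun n S := by
    rw [half_sq_sub_Nfun]
    have := pow_le_pow_left₀ hγn.le (show (1 - 2 * η) * n ≤ n - S.card by linarith) 2
    linarith [(S.card.cast_nonneg : (0 : ℝ) ≤ S.card)]
  have hident : (avgDeg G - avgDeg G') * ((n : ℝ) ^ 2 / 2 - Nfun n S)
      = n * (eIn G S + eCut G S - avgDeg G / n * Nfun n S)
        - n * (eIn G' S + eCut G' S - avgDeg G' / n * Nfun n S) := by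
    have := mul_avgDeg_sub_avgDeg hn hGG'
    field_simp
    linear_combination (n : ℝ) * this
  have hprod : |avgDeg G - avgDeg G'| * (((1 - 2 * η) * n) ^ 2 / 2) ≤ n * (β + β') :=
    calc |avgDeg G - avgDeg G'| * (((1 - 2 * η) * n) ^ 2 / 2)
        ≤ |(avgDeg G - avgDeg G') * ((n : ℝ) ^ 2 / 2 - Nfun n S)| := by
          rw [abs_mul, abs_of_nonneg (hmargin.trans' (by positivity))]
          exact mul_le_mul_of_nonneg_left hmargin (abs_nonneg _)
      _ ≤ n * β + n * β' := by
          rw [hident]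
          refine (abs_sub _ _).trans (add_le_add ?_ ?_) <;>
            rw [abs_mul, abs_of_pos hn0] <;> gcongr
      _ = n * (β + β') := by ring
  have hpos : 0 < ((1 - 2 * η) * n) ^ 2 / 2 := by positivity
  rw [← le_div_iff₀ hpos] at hprod
  refine hprod.trans_eq ?_
  rw [div_eq_div_iff hpos.ne' (by positivity)]
  ring

end Graph

lemma sqrt_le_add_of_abs_sub_le {x y a c : ℝ} (hx : 1 ≤ x) (hy : 0 ≤ y) (ha : 0 ≤ a)
    (hc : 0 ≤ c)
    (h : |x - y| ≤ a * (√x + √y) + c) : √y ≤ √x + a + c := by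
  have hsx : 1 ≤ √x := Real.one_le_sqrt.mpr hx
  have hyx : √y ^ 2 - √x ^ 2 ≤ a * (√x + √y) + c := by
    rw [Real.sq_sqrt hy, Real.sq_sqrt (by linarith)]
    exact (abs_sub_comm x y ▸ le_abs_self (y - x)).trans h
  -- otherwise `(√y - √x) (√y + √x) > (a + c) (√x + √y) ≥ a (√x + √y) + c` as `√x ≥ 1`
  by_contra! hlt
  nlinarith [Real.sqrt_nonneg y]

lemma mul_log_one_div_le_one {η : ℝ} (hη : 0 < η) : η * Real.log (1 / η) ≤ 1 := by
  have := mul_le_mul_of_nonneg_left (Real.log_le_sub_one_of_pos (one_div_pos.mpr hη)) hη.le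
  rw [mul_sub, mul_one_div_cancel hη.ne'] at this
  linarith

lemma mul_sqrt_log_one_div_le_one {η : ℝ} (hη : 0 < η) (hη1 : η ≤ 1) :
    η * √(Real.log (1 / η)) ≤ 1 := by
  have hL : 0 ≤ Real.log (1 / η) := Real.log_nonneg (by rw [le_div_iff₀ hη]; linarith)
  by_contra! h
  nlinarith [Real.sq_sqrt hL, Real.sqrt_nonneg (Real.log (1 / η)), mul_log_one_div_le_one hη]

lemma identifiability_estimate {C γ v w s : ℝ} (hC : 0 ≤ C) (hγ : 0 < γ) (hγ1 : γ ≤ 1)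
    (hv : 0 ≤ v) (hv1 : v ≤ 1) (hw : 0 ≤ w) (hw1 : w ≤ 1) (hs : 1 ≤ s) :
    2 * C * v / γ ^ 2 * (2 * s + 2 * C * v / γ ^ 2 + 4 * C * w / γ ^ 2) + 4 * C * w / γ ^ 2
      ≤ 4 * C * (3 * C + 1) * (v * s / γ ^ 4 + w / γ ^ 2) := by
  have hvs : v * s * γ ^ 2 ≤ v * s :=
    mul_le_of_le_one_right (by positivity) (pow_le_one₀ hγ.le hγ1)
  have hvv : v * v ≤ v * s := mul_le_mul_of_nonneg_left (hv1.trans hs) hv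
  have hvw : v * w ≤ v * s := mul_le_mul_of_nonneg_left (hw1.trans hs) hv
  calc 2 * C * v / γ ^ 2 * (2 * s + 2 * C * v / γ ^ 2 + 4 * C * w / γ ^ 2) + 4 * C * w / γ ^ 2
      = (4 * C * (v * s * γ ^ 2) + 4 * C ^ 2 * (v * v) + 8 * C ^ 2 * (v * w)) / γ ^ 4
        + 4 * C * w / γ ^ 2 := by
        field_simp
        ring
    _ ≤ (12 * C ^ 2 + 4 * C) * (v * s) / γ ^ 4 + (12 * C ^ 2 + 4 * C) * w / γ ^ 2 := by
        gcongr
        · nlinarith [sq_nonneg C]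
        · nlinarith [sq_nonneg C]
    _ = 4 * C * (3 * C + 1) * (v * s / γ ^ 4 + w / γ ^ 2) := by ring

/-- Identifiability (Section 2.1): two graphs differing only on edges incident to at most
a 2η-fraction of vertices, both satisfying the goodness condition, have close average degrees. -/
theorem identifiability :
    ∀ C : ℝ, 0 < C →
    ∃ K : ℝ, 0 < K ∧
      ∀ n : ℕ, 1 ≤ n →
      ∀ η : ℝ, 0 < η → η < 1 / 2 →
      ∀ G G' : Edge n → Bool, ∀ S : Finset (Fin n),
        (S.card : ℝ) ≤ 2 * η * n →
        (∀ q : Edge n, q.1.1 ∉ S → q.1.2 ∉ S → G q = G' q) →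
        1 ≤ avgDeg G →
        (∀ T : Finset (Fin n), (T.card : ℝ) ≤ 2 * η * n →
          |eIn G T + eCut G T - avgDeg G / n * Nfun n T| ≤
            C * (Real.sqrt (Real.log (1 / η)) * Real.sqrt (avgDeg G) + Real.log (1 / η))
              * (η * n)) →
        (∀ T : Finset (Fin n), (T.card : ℝ) ≤ 2 * η * n →
          |eIn G' T + eCut G' T - avgDeg G' / n * Nfun n T| ≤
            C * (Real.sqrt (Real.log (1 / η)) * Real.sqrt (avgDeg G') + Real.log (1 / η))
              * (η * n)) →
        |avgDeg G - avgDeg G'| ≤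
          K * (η * Real.sqrt (Real.log (1 / η)) * Real.sqrt (avgDeg G) / (1 - 2 * η) ^ 4
              + η * Real.log (1 / η) / (1 - 2 * η) ^ 2) := by
  intro C hC
  refine ⟨4 * C * (3 * C + 1), by positivity, ?_⟩
  intro n hn η hη hη2 G G' S hS hGG' hd hG hG'
  set L := Real.log (1 / η)
  have hL : 0 ≤ L := Real.log_nonneg (by rw [le_div_iff₀ hη]; linarith)
  have hγ : 0 < 1 - 2 * η := by linarith
  set a := 2 * C * (η * √L) / (1 - 2 * η) ^ 2
  set c := 4 * C * (η * L) / (1 - 2 * η) ^ 2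
  have hdiff : |avgDeg G - avgDeg G'| ≤ a * (√(avgDeg G) + √(avgDeg G')) + c := by
    refine (abs_avgDeg_sub_le (by omega) hη2 hS hGG' (hG S hS) (hG' S hS)).trans_eq ?_
    simp only [a, c]
    field_simp
    ring
  have ha : 0 ≤ a := by positivity
  have hsqrt : √(avgDeg G') ≤ √(avgDeg G) + a + c :=
    sqrt_le_add_of_abs_sub_le hd (avgDeg_nonneg G') ha (by positivity) hdiff
  calc |avgDeg G - avgDeg G'| ≤ a * (√(avgDeg G) + √(avgDeg G')) + c := hdiff
    _ ≤ a * (2 * √(avgDeg G) + a + c) + c := by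
        linarith [mul_le_mul_of_nonneg_left hsqrt ha]
    _ ≤ _ := identifiability_estimate hC.le hγ (by linarith) (by positivity)
        (mul_sqrt_log_one_div_le_one hη (by linarith)) (by positivity)
        (mul_log_one_div_le_one hη) (Real.one_le_sqrt.mpr hd)

end ER
end

section
/- Fix constants c, C > 0, C_{Y*} > 0, C_deg > 0 and η ∈ (0, 1/2). Let A be a symmetric n×n real matrix, let z, z* ∈ {0,1}ⁿ with ∑_i z_i ≤ ηn and ∑_i z*_i ≤ ηn, and let Y, Y* be symmetric n×n matrices with all entries in [0,1] such that Y_{ij} = A_{ij} whenever z_i = z_j = 0, and Y*_{ij} = A_{ij} whenever z*_i = z*_j = 0. Write d(M) = (1/n)∑_{i,j} M_{ij}. Suppose that for each H ∈ {Y, Y*} and every w ∈ [0,1]ⁿ with ∑_i w_i ≤ 2ηn: ⟨H − (d(H)/n)·𝟙𝟙ᵀ, 2w𝟙ᵀ − wwᵀ⟩² ≤ C_deg·η²·log(1/η)·n²·d(H) + C_deg·η²·log²(1/η)·n². If d(Y*) ≥ C_{Y*}, then there is a constant K depending only on C_deg and C_{Y*} such that (d(Y) − d(Y*))² ≤ K·(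 η²·log(1/η)/(1−2η)⁸ · d(Y*) + η²·log²(1/η)/(1−2η)⁴ ). -/
set_option maxHeartbeats 4000000

namespace ER

/-- Average degree `d(M) = (1/n) ∑_{i,j} M_{ij}` of a matrix. -/
noncomputable def dAvg {n : ℕ} (M : Matrix (Fin n) (Fin n) ℝ) : ℝ :=
  (1 / n) * ∑ i, ∑ j, M i j

private lemma keyIdentity {n : ℕ} (hn : (n:ℝ) ≠ 0) (H : Matrix (Fin n) (Fin n) ℝ)
    (hH : H.IsSymm) (w : Fin n → ℝ) :
    ∑ i, ∑ j, (H i j - dAvg H / n) * (2 * w i - w i * w j)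
      = dAvg H * ((n:ℝ) - ∑ i, w i) ^ 2 / n
        - ∑ i, ∑ j, (1 - w i) * (1 - w j) * H i j := by
  have hsum : (∑ i, ∑ j, H i j) = (n:ℝ) * dAvg H := by
    unfold dAvg; field_simp
  have swap : (∑ i, ∑ j, H i j * w i) = ∑ i, ∑ j, H i j * w j := by
    rw [Finset.sum_comm]
    refine Finset.sum_congr rfl fun i _ => Finset.sum_congr rfl fun j _ => ?_
    rw [hH.apply]
  have h1 : (∑ i, (1 - w i)) = (n:ℝ) - ∑ i, w i := by
    rw [Finset.sum_sub_distrib]; simp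
  have h2 : (∑ i, ∑ j, (1 - w i) * (1 - w j)) = ((n:ℝ) - ∑ i, w i) ^ 2 := by
    rw [← Finset.sum_mul_sum, h1, sq]
  have h3 : (∑ i, ∑ j, dAvg H / n * ((1 - w i) * (1 - w j)))
      = dAvg H / n * ((n:ℝ) - ∑ i, w i) ^ 2 := by
    simp only [← Finset.mul_sum]; rw [h1, ← Finset.sum_mul, h1]; ring
  have h4 : (∑ _ : Fin n, ∑ j, dAvg H / n * w j) = ∑ i, ∑ _ : Fin n, dAvg H / n * w i :=
    by simp only [← Finset.mul_sum, Finset.sum_const, Finset.card_univ,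
      Fintype.card_fin, nsmul_eq_mul]
  have hc : (∑ (_ : Fin n), ∑ (_ : Fin n), dAvg H / n) = (n:ℝ) * ((n:ℝ) * (dAvg H / n)) := by
    simp [Finset.sum_const, mul_comm]
  have expand : ∀ i j : Fin n, (H i j - dAvg H / n) * (2 * w i - w i * w j)
      = (H i j - (1 - w i) * (1 - w j) * H i j
          - dAvg H / n + dAvg H / n * ((1 - w i) * (1 - w j)))
        + (H i j * w i - H i j * w j)
        + (dAvg H / n * w j - dAvg H / n * w i) := fun i j => by ring
  simp_rw [expand, Finset.sum_add_distrib, Finset.sum_sub_distrib]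
  rw [swap, h4, hsum, h3, hc]
  field_simp
  ring

private lemma numeric (Cdeg CYs η L nn m dY dS SS : ℝ)
    (hCdeg : 0 < Cdeg) (hCYs : 0 < CYs) (hη : 0 < η) (hη2 : η < 1/2)
    (hL : 0 < L) (hηL : η^2 * L ≤ 1) (hn : 0 < nn)
    (hm1 : (1 - 2*η) * nn ≤ m)
    (hcY : (dY * m^2 / nn - SS)^2 ≤ Cdeg*η^2*L*nn^2*dY + Cdeg*η^2*L^2*nn^2)
    (hcS : (dS * m^2 / nn - SS)^2 ≤ Cdeg*η^2*L*nn^2*dS + Cdeg*η^2*L^2*nn^2)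
    (hCY : CYs ≤ dS) :
    (dY - dS)^2 ≤ (8*Cdeg + 4*Cdeg^2/CYs) *
      (η^2*L/(1-2*η)^8 * dS + η^2*L^2/(1-2*η)^4) := by
  set v := 1 - 2*η with hvdef
  clear_value v
  have hv : 0 < v := by rw [hvdef]; linarith
  have hv1 : v ≤ 1 := by rw [hvdef]; linarith
  have hmpos : 0 < m := lt_of_lt_of_le (mul_pos hv hn) hm1
  have hnne : nn ≠ 0 := ne_of_gt hn
  have hdSpos : 0 < dS := lt_of_lt_of_le hCYs hCY
  have hP : ((dY - dS) * m^2 / nn)^2 ≤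
      2*Cdeg*η^2*L*nn^2*dY + 2*Cdeg*η^2*L*nn^2*dS + 4*Cdeg*η^2*L^2*nn^2 := by
    have e : ((dY - dS) * m^2 / nn)^2
        = ((dY * m^2 / nn - SS) - (dS * m^2 / nn - SS))^2 := by ring
    rw [e]
    nlinarith [sq_nonneg ((dY * m^2 / nn - SS) + (dS * m^2 / nn - SS))]
  have key1 : (dY - dS)^2 * m^4 ≤
      (2*Cdeg*η^2*L*dY + 2*Cdeg*η^2*L*dS + 4*Cdeg*η^2*L^2) * nn^4 := by
    have h' := mul_le_mul_of_nonneg_right hP (sq_nonneg nn)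
    calc (dY - dS)^2 * m^4 = ((dY - dS) * m^2 / nn)^2 * nn^2 := by
          field_simp
      _ ≤ (2*Cdeg*η^2*L*nn^2*dY + 2*Cdeg*η^2*L*nn^2*dS + 4*Cdeg*η^2*L^2*nn^2) * nn^2 := h'
      _ = (2*Cdeg*η^2*L*dY + 2*Cdeg*η^2*L*dS + 4*Cdeg*η^2*L^2) * nn^4 := by ring
  have hv4' : (v*nn)^4 ≤ m^4 := pow_le_pow_left₀ (le_of_lt (mul_pos hv hn)) hm1 4
  have key2 : (dY - dS)^2 * v^4 ≤ 2*Cdeg*η^2*L*dY + 2*Cdeg*η^2*L*dS + 4*Cdeg*η^2*L^2 := by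
    have hn4 : 0 < nn^4 := by positivity
    have h1 : (dY - dS)^2 * (v^4 * nn^4) ≤
        (2*Cdeg*η^2*L*dY + 2*Cdeg*η^2*L*dS + 4*Cdeg*η^2*L^2) * nn^4 := by
      refine le_trans ?_ key1
      have := mul_le_mul_of_nonneg_left hv4' (sq_nonneg (dY - dS))
      nlinarith [this]
    refine le_of_mul_le_mul_right ?_ hn4
    calc (dY - dS)^2 * v^4 * nn^4 = (dY - dS)^2 * (v^4 * nn^4) := by ring
      _ ≤ _ := h1
  set x := |dY - dS| with hxdef
  clear_value x
  have hx0 : 0 ≤ x := hxdef ▸ abs_nonneg _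
  have hxsq : x^2 = (dY - dS)^2 := by rw [hxdef]; exact sq_abs _
  have hdY : dY ≤ dS + x := by
    have := le_abs_self (dY - dS); rw [← hxdef] at this; linarith
  have hpos : (0:ℝ) < 2*Cdeg*η^2*L := by positivity
  have key3 : x^2 * v^4 ≤ 2*Cdeg*η^2*L*x + 4*Cdeg*η^2*L*dS + 4*Cdeg*η^2*L^2 := by
    rw [hxsq]
    linarith [key2, mul_le_mul_of_nonneg_left hdY (le_of_lt hpos)]
  have hv4le : v^4 ≤ 1 := by
    calc v^4 ≤ 1^4 := pow_le_pow_left₀ (le_of_lt hv) hv1 4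
      _ = 1 := one_pow 4
  have key4 : x^2 * v^8 ≤ 2*Cdeg*η^2*L*(x*v^4) + 4*Cdeg*η^2*L*(dS*v^4) + 4*Cdeg*η^2*L^2*v^4 := by
    have h1 := mul_le_mul_of_nonneg_right key3 (le_of_lt (by positivity : (0:ℝ) < v^4))
    linarith [h1]
  have hds4 : 4*Cdeg*η^2*L*(dS*v^4) ≤ 4*Cdeg*η^2*L*dS := by
    have h : dS*v^4 ≤ dS := by nlinarith [hdSpos, hv4le]
    exact mul_le_mul_of_nonneg_left h (by positivity)
  have key6 : x^2*v^8 ≤ 4*Cdeg^2*η^4*L^2 + 8*Cdeg*η^2*L*dS + 8*Cdeg*η^2*L^2*v^4 := by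
    nlinarith [key4, hds4, sq_nonneg (x*v^4 - 2*Cdeg*η^2*L)]
  have key7 : x^2*v^8 ≤ (8*Cdeg + 4*Cdeg^2/CYs)*(η^2*L*dS + η^2*L^2*v^4) := by
    have e1 : CYs * (4*Cdeg^2*η^4*L^2) ≤ dS * (4*Cdeg^2*η^4*L^2) :=
      mul_le_mul_of_nonneg_right hCY (by positivity)
    have e2 : dS * (4*Cdeg^2*η^4*L^2) ≤ 4*Cdeg^2*(η^2*L*dS) := by
      have := mul_le_mul_of_nonneg_left hηL
        (by positivity : (0:ℝ) ≤ 4*Cdeg^2*η^2*L*dS)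
      linarith [this]
    have k := mul_le_mul_of_nonneg_left key6 (le_of_lt hCYs)
    have hpos2 : (0:ℝ) ≤ 4*Cdeg^2*(η^2*L^2*v^4) := by positivity
    have key7' : CYs*(x^2*v^8) ≤ (8*Cdeg*CYs + 4*Cdeg^2)*(η^2*L*dS + η^2*L^2*v^4) := by
      nlinarith [k, e1, e2, hpos2]
    have e : (8*Cdeg + 4*Cdeg^2/CYs)*(η^2*L*dS + η^2*L^2*v^4)
        = (8*Cdeg*CYs + 4*Cdeg^2)*(η^2*L*dS + η^2*L^2*v^4)/CYs := by
      field_simp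
    rw [e, le_div_iff₀ hCYs]
    linarith [key7']
  have hv8 : 0 < v^8 := by positivity
  have egoal : (8*Cdeg + 4*Cdeg^2/CYs) * (η^2*L/v^8*dS + η^2*L^2/v^4)
      = (8*Cdeg + 4*Cdeg^2/CYs)*(η^2*L*dS + η^2*L^2*v^4)/v^8 := by
    field_simp
  rw [egoal, le_div_iff₀ hv8]
  calc (dY - dS)^2 * v^8 = x^2*v^8 := by rw [hxsq]
    _ ≤ _ := key7

/-- Deterministic utility lemma (Lemma 3.3): any two matrices satisfying the
corruption-agreement constraints and the degree-concentration certificate over the relaxed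
hypercube have close average degrees. -/
theorem utility :
    ∀ Cdeg CYs : ℝ, 0 < Cdeg → 0 < CYs →
    ∃ K : ℝ, 0 < K ∧
      ∀ (n : ℕ) (η : ℝ), 0 < η → η < 1 / 2 →
      ∀ (A Y Ystar : Matrix (Fin n) (Fin n) ℝ) (z zstar : Fin n → ℝ),
        (∀ i, z i = 0 ∨ z i = 1) → (∀ i, zstar i = 0 ∨ zstar i = 1) →
        (∑ i, z i ≤ η * n) → (∑ i, zstar i ≤ η * n) →
        A.IsSymm → Y.IsSymm → Ystar.IsSymm →
        (∀ i j, 0 ≤ Y i j ∧ Y i j ≤ 1) → (∀ i j, 0 ≤ Ystar i j ∧ Ystar i j ≤ 1) →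
        (∀ i j, z i = 0 → z j = 0 → Y i j = A i j) →
        (∀ i j, zstar i = 0 → zstar j = 0 → Ystar i j = A i j) →
        (∀ w : Fin n → ℝ, (∀ i, 0 ≤ w i ∧ w i ≤ 1) → (∑ i, w i ≤ 2 * η * n) →
          (∑ i, ∑ j, (Y i j - dAvg Y / n) * (2 * w i - w i * w j)) ^ 2 ≤
            Cdeg * η ^ 2 * Real.log (1 / η) * (n : ℝ) ^ 2 * dAvg Y
              + Cdeg * η ^ 2 * (Real.log (1 / η)) ^ 2 * (n : ℝ) ^ 2) →
        (∀ w : Fin n → ℝ, (∀ i, 0 ≤ w i ∧ w i ≤ 1) → (∑ i, w i ≤ 2 * η * n) →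
          (∑ i, ∑ j, (Ystar i j - dAvg Ystar / n) * (2 * w i - w i * w j)) ^ 2 ≤
            Cdeg * η ^ 2 * Real.log (1 / η) * (n : ℝ) ^ 2 * dAvg Ystar
              + Cdeg * η ^ 2 * (Real.log (1 / η)) ^ 2 * (n : ℝ) ^ 2) →
        CYs ≤ dAvg Ystar →
        (dAvg Y - dAvg Ystar) ^ 2 ≤
          K * (η ^ 2 * Real.log (1 / η) / (1 - 2 * η) ^ 8 * dAvg Ystar
              + η ^ 2 * (Real.log (1 / η)) ^ 2 / (1 - 2 * η) ^ 4) := by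
  intro Cdeg CYs hCdeg hCYs
  refine ⟨8 * Cdeg + 4 * Cdeg ^ 2 / CYs, by positivity, ?_⟩
  intro n η hη hη2 A Y Ystar z zstar hz hzs hzsum hzssum hAs hYs hSs hY01 hS01 hYA hSA
    certY certS hCY
  have hL : 0 < Real.log (1 / η) := Real.log_pos (by rw [lt_div_iff₀ hη]; linarith)
  rcases Nat.eq_zero_or_pos n with hn0 | hnpos
  · exfalso
    subst hn0
    simp [dAvg] at hCY
    linarith
  have hn : (0:ℝ) < n := by exact_mod_cast hnpos
  have hnne : (n:ℝ) ≠ 0 := ne_of_gt hn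
  -- the corruption indicator vector
  set w : Fin n → ℝ := fun i => z i + zstar i - z i * zstar i with hwdef
  have hwbin : ∀ i, w i = 0 ∨ w i = 1 := by
    intro i; rcases hz i with h | h <;> rcases hzs i with h' | h' <;>
      simp [hwdef, h, h']
  have hw01 : ∀ i, 0 ≤ w i ∧ w i ≤ 1 := by
    intro i; rcases hwbin i with h | h <;> rw [h] <;> norm_num
  have hwle : ∀ i, w i ≤ z i + zstar i := by
    intro i; rcases hz i with h | h <;> rcases hzs i with h' | h' <;>
      simp [hwdef, h, h']
  have hwsum : ∑ i, w i ≤ 2 * η * n := by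
    have h1 : ∑ i, w i ≤ ∑ i, (z i + zstar i) := Finset.sum_le_sum fun i _ => hwle i
    rw [Finset.sum_add_distrib] at h1
    linarith
  have hzero : ∀ k, w k = 0 → z k = 0 ∧ zstar k = 0 := by
    intro k hk
    rcases hz k with h1 | h1 <;> rcases hzs k with h2 | h2 <;>
      simp [hwdef, h1, h2] at hk <;> exact ⟨h1, h2⟩
  -- the two matrices agree on the uncorrupted block
  have hSeq : (∑ i, ∑ j, (1 - w i) * (1 - w j) * Y i j)
      = ∑ i, ∑ j, (1 - w i) * (1 - w j) * Ystar i j := by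
    refine Finset.sum_congr rfl fun i _ => Finset.sum_congr rfl fun j _ => ?_
    rcases hwbin i with h | h
    · rcases hwbin j with h' | h'
      · rw [hYA i j (hzero i h).1 (hzero j h').1, hSA i j (hzero i h).2 (hzero j h').2]
      · rw [h']; ring
    · rw [h]; ring
  have hm1 : (1 - 2 * η) * (n:ℝ) ≤ (n:ℝ) - ∑ i, w i := by linarith
  have hηL : η ^ 2 * Real.log (1 / η) ≤ 1 := by
    have hlog : Real.log (1 / η) ≤ 1 / η - 1 :=
      Real.log_le_sub_one_of_pos (by positivity)
    have e : η ^ 2 * (1 / η - 1) = η - η ^ 2 := by field_simp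
    have h' := mul_le_mul_of_nonneg_left hlog (sq_nonneg η)
    nlinarith
  have hcY := certY w hw01 hwsum
  have hcS := certS w hw01 hwsum
  rw [keyIdentity hnne Y hYs w, hSeq] at hcY
  rw [keyIdentity hnne Ystar hSs w] at hcS
  exact numeric Cdeg CYs η (Real.log (1 / η)) (n:ℝ) ((n:ℝ) - ∑ i, w i) (dAvg Y)
    (dAvg Ystar) (∑ i, ∑ j, (1 - w i) * (1 - w j) * Ystar i j)
    hCdeg hCYs hη hη2 hL hηL hn hm1 hcY hcS hCY

end ER
end

section
/- Let 0 < d ≤ n. For every constant C > 0 there exist C' > 0 and n₀ (depending only on C) such that for all n ≥ n₀, with probability at least 1 − n^{−C} over A drawn from G(n, d/n), the number of indices i ∈ [n] whose degree d_i = ∑_j A_{ij} exceeds 2(1−1/n)d is at most C'·n/d. -/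
open MeasureTheory Finset

namespace ER

set_option linter.deprecated false

/-!
If more than `C' n / d` vertices have degree above `θ = 2(1 - 1/n)d`, then some set `T` of
`m = ⌊C' n / d⌋ + 1` of them does, so `∑_{i ∈ T} dᵢ ≥ θ m`. This sum is `∑_e c_e A_e`, where
`c_e ∈ {0, 1, 2}` counts the endpoints of `e` in `T` and `∑_e c_e = m (n - 1)`, so its mean
`(d/n) m (n - 1) = θ m / 2` is half the threshold. An exponential Markov bound with base `4/3`
(small enough that `(4/3)^c - 1 ≤ 2c/5` for `c ≤ 2`, while `log (4/3) ≥ 1/4`) makes the event for a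
fixed `T` have probability at most `exp (-(d/n) m (n - 1) / 10) ≤ e^{-4(n-1)}` when `C' = 40`. This
beats the union bound over the at most `2^n` sets `T`, with room for `n^{-C}`.
-/

open scoped ENNReal NNReal
open ProbabilityTheory Real

section Chernoff

variable {ι : Type*} [Fintype ι] (r : ℝ≥0) (hr : r ≤ 1)

lemma lintegral_bernoulli (f : Bool → ℝ≥0∞) :
    ∫⁻ b, f b ∂(PMF.bernoulli r hr).toMeasure = (1 - r) * f false + r * f true := by
  rw [lintegral_fintype, Fintype.sum_bool]
  simp [PMF.bernoulli_apply, mul_comm, add_comm]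

lemma lintegral_prod_pi_bernoulli (f : ι → Bool → ℝ≥0∞) :
    ∫⁻ ω, ∏ i, f i (ω i) ∂Measure.pi (fun _ ↦ (PMF.bernoulli r hr).toMeasure) =
      ∏ i, ((1 - r) * f i false + r * f i true) := by
  rw [lintegral_prod_eq_prod_lintegral_of_indepFun _ _
    (iIndepFun_pi fun i ↦ (measurable_of_countable (f i)).aemeasurable)
    fun i ↦ (measurable_of_countable (f i)).comp (measurable_pi_apply i)]
  refine Finset.prod_congr rfl fun i _ ↦ ?_
  rw [(measurePreserving_eval _ i).lintegral_comp (measurable_of_countable (f i)),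
    lintegral_bernoulli]

theorem pow_mul_pi_bernoulli_le_prod (a : ℝ≥0∞) (ha : 1 ≤ a) (c : ι → ℕ) (t : ℕ) :
    a ^ t * Measure.pi (fun _ ↦ (PMF.bernoulli r hr).toMeasure)
        {ω | t ≤ ∑ i, c i * (ω i).toNat} ≤ ∏ i, (1 - r + r * a ^ c i) := by
  set μ := Measure.pi fun _ : ι ↦ (PMF.bernoulli r hr).toMeasure
  calc a ^ t * μ {ω | t ≤ ∑ i, c i * (ω i).toNat}
      ≤ a ^ t * μ {ω | a ^ t ≤ ∏ i, a ^ (c i * (ω i).toNat)} := by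
        gcongr with ω
        rw [Finset.prod_pow_eq_pow_sum]
        exact pow_le_pow_right₀ ha
    _ ≤ ∫⁻ ω, ∏ i, a ^ (c i * (ω i).toNat) ∂μ :=
        mul_meas_ge_le_lintegral₀ (measurable_of_countable _).aemeasurable _
    _ = ∏ i, (1 - r + r * a ^ c i) := by
        rw [lintegral_prod_pi_bernoulli r hr fun i b ↦ a ^ (c i * b.toNat)]
        simp

theorem pi_bernoulli_weighted_sum_ge_le (a : ℝ) (ha : 1 ≤ a) (c : ι → ℕ) (t : ℕ) :
    Measure.pi (fun _ ↦ (PMF.bernoulli r hr).toMeasure) {ω | t ≤ ∑ i, c i * (ω i).toNat} ≤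
      ENNReal.ofReal (exp (r * ∑ i, (a ^ c i - 1)) / a ^ t) := by
  have hfactor (k : ℕ) :
      1 - (r : ℝ≥0∞) + r * ENNReal.ofReal a ^ k ≤ ENNReal.ofReal (exp (r * (a ^ k - 1))) := by
    have hak : 1 ≤ a ^ k := one_le_pow₀ ha
    rw [← ENNReal.ofReal_coe_nnreal, ← ENNReal.ofReal_one, ← ENNReal.ofReal_sub _ r.coe_nonneg,
      ← ENNReal.ofReal_pow (by linarith), ← ENNReal.ofReal_mul r.coe_nonneg,
      ← ENNReal.ofReal_add (by simpa using hr) (by positivity)]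
    refine ENNReal.ofReal_le_ofReal ?_
    linarith [add_one_le_exp (r * (a ^ k - 1))]
  have hmarkov := pow_mul_pi_bernoulli_le_prod r hr (ENNReal.ofReal a) (by simpa using ha) c t
  rw [ENNReal.ofReal_div_of_pos (by positivity),
    ENNReal.le_div_iff_mul_le (Or.inl (ENNReal.ofReal_pos.2 (by positivity)).ne')
      (Or.inl ENNReal.ofReal_ne_top), mul_comm, ENNReal.ofReal_pow (by linarith), mul_sum, exp_sum,
    ENNReal.ofReal_prod_of_nonneg fun _ _ ↦ (exp_pos _).le]
  exact hmarkov.trans (prod_le_prod' fun i _ ↦ hfactor (c i))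

end Chernoff

section DegreeSum

variable {n : ℕ} (ω : Edge n → Bool)

noncomputable def adjUpper (a b : Fin n) : ℝ :=
  if h : a < b then (if ω ⟨(a, b), h⟩ then 1 else 0) else 0

lemma adj_eq_adjUpper_add (a b : Fin n) : adj ω a b = adjUpper ω a b + adjUpper ω b a := by
  unfold adj adjUpper
  rcases lt_trichotomy a b with h | rfl | h
  · simp [h, h.not_gt]
  · simp
  · simp [h, h.not_gt]

lemma sum_edge_eq_sum_adjUpper (f : Fin n → Fin n → ℝ) :
    ∑ e : Edge n, f e.1.1 e.1.2 * (if ω e then 1 else 0) = ∑ a, ∑ b, f a b * adjUpper ω a b := by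
  rw [← Fintype.sum_prod_type',
    ← Fintype.sum_subtype_add_sum_subtype fun q : Fin n × Fin n ↦ q.1 < q.2]
  have hlower :
      ∑ q : {q : Fin n × Fin n // ¬q.1 < q.2}, f q.1.1 q.1.2 * adjUpper ω q.1.1 q.1.2 = 0 :=
    Fintype.sum_eq_zero _ fun q ↦ by rw [adjUpper, dif_neg q.2, mul_zero]
  rw [hlower, add_zero]
  exact Fintype.sum_congr _ _ fun e ↦ by rw [adjUpper, dif_pos e.2]

lemma sum_mul_deg (g : Fin n → ℝ) :
    ∑ a, g a * deg ω a = ∑ e : Edge n, (g e.1.1 + g e.1.2) * (if ω e then 1 else 0) := by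
  rw [sum_edge_eq_sum_adjUpper ω fun a b ↦ g a + g b]
  simp only [deg, adj_eq_adjUpper_add, mul_sum, mul_add, add_mul, sum_add_distrib]
  rw [sum_comm (f := fun a b ↦ g a * adjUpper ω b a)]

def endpointsIn (T : Finset (Fin n)) (e : Edge n) : ℕ :=
  (if e.1.1 ∈ T then 1 else 0) + (if e.1.2 ∈ T then 1 else 0)

lemma endpointsIn_le_two (T : Finset (Fin n)) (e : Edge n) : endpointsIn T e ≤ 2 := by
  unfold endpointsIn
  split_ifs <;> norm_num

lemma sum_deg_eq_sum_endpointsIn (T : Finset (Fin n)) :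
    ∑ i ∈ T, deg ω i = ∑ e : Edge n, endpointsIn T e * (ω e).toNat := by
  have hT : ∑ i ∈ T, deg ω i = ∑ i, (if i ∈ T then 1 else 0) * deg ω i := by
    simp only [boole_mul, sum_ite_mem, univ_inter]
  rw [hT, sum_mul_deg]
  push_cast [endpointsIn]
  exact sum_congr rfl fun e _ ↦ by cases ω e <;> simp

lemma deg_const_true (i : Fin n) : deg (fun _ ↦ true) i = n - 1 := by
  have hadj (j : Fin n) : adj (fun _ ↦ true) i j = 1 - if i = j then 1 else 0 := by
    unfold adj
    rcases lt_trichotomy i j with h | rfl | h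
    · simp [h, h.ne]
    · simp
    · simp [h, h.ne', h.not_gt]
  simp [deg, hadj, sum_sub_distrib]

lemma sum_endpointsIn (T : Finset (Fin n)) :
    ∑ e : Edge n, (endpointsIn T e : ℝ) = #T * (n - 1) := by
  have h := sum_deg_eq_sum_endpointsIn (fun _ ↦ true) T
  simp only [deg_const_true, sum_const, nsmul_eq_mul, Bool.toNat_true, mul_one] at h
  exact_mod_cast h.symm

end DegreeSum

instance (n : ℕ) (d : ℝ) : IsProbabilityMeasure (erMeasure n d) := by
  unfold erMeasure
  infer_instance

lemma four_thirds_pow_sub_one_le {k : ℕ} (hk : k ≤ 2) : (4 / 3 : ℝ) ^ k - 1 ≤ 2 / 5 * k := by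
  interval_cases k <;> norm_num

lemma exp_one_div_four_le : exp (1 / 4) ≤ 4 / 3 := by
  have h1 := add_one_le_exp (-(1 / 4))
  have h2 : exp (1 / 4) * exp (-(1 / 4)) = 1 := by rw [← exp_add]; norm_num
  nlinarith [exp_pos (1 / 4)]

lemma erMeasure_forall_mem_deg_gt_le {n : ℕ} {d : ℝ} (hd : 0 ≤ d) (hdn : d ≤ n)
    (T : Finset (Fin n)) :
    erMeasure n d {ω | ∀ i ∈ T, 2 * (1 - 1 / n) * d < deg ω i} ≤
      ENNReal.ofReal (exp (-(d / n * #T * (n - 1) / 10))) := by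
  obtain rfl | hn := Nat.eq_zero_or_pos n
  · simp
  set p := d / n with hp_def
  set b := p * #T * (n - 1) with hb_def
  set t := ⌈2 * b⌉₊
  have hp0 : 0 ≤ p := by positivity
  have hp : ((min (d / n).toNNReal 1 : ℝ≥0) : ℝ) = p := by
    rw [NNReal.coe_min, Real.coe_toNNReal _ hp0, NNReal.coe_one,
      min_eq_left (div_le_one_of_le₀ hdn (Nat.cast_nonneg n))]
  have hevent : {ω | ∀ i ∈ T, 2 * (1 - 1 / n) * d < deg ω i} ⊆
      {ω | t ≤ ∑ e, endpointsIn T e * (ω e).toNat} := by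
    intro ω hω
    rw [Set.mem_setOf_eq, Nat.ceil_le, ← sum_deg_eq_sum_endpointsIn]
    calc 2 * b = ∑ _i ∈ T, 2 * (1 - 1 / n) * d := by
          rw [sum_const, nsmul_eq_mul, hb_def, hp_def]
          field_simp
      _ ≤ ∑ i ∈ T, deg ω i := sum_le_sum fun i hi ↦ (hω i hi).le
  have hweights : p * ∑ e, ((4 / 3 : ℝ) ^ endpointsIn T e - 1) ≤ 2 / 5 * b := by
    rw [hb_def, mul_assoc, ← sum_endpointsIn, mul_sum, mul_sum, mul_sum]
    refine sum_le_sum fun e _ ↦ ?_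
    nlinarith [four_thirds_pow_sub_one_le (endpointsIn_le_two T e)]
  have hpow : exp (b / 2) ≤ (4 / 3) ^ t := calc
    exp (b / 2) ≤ exp (1 / 4) ^ t := by
      rw [← exp_nat_mul]
      exact exp_le_exp.2 (by linarith [Nat.le_ceil (2 * b)])
    _ ≤ (4 / 3) ^ t := by gcongr; exact exp_one_div_four_le
  calc erMeasure n d {ω | ∀ i ∈ T, 2 * (1 - 1 / n) * d < deg ω i}
      ≤ erMeasure n d {ω | t ≤ ∑ e, endpointsIn T e * (ω e).toNat} := measure_mono hevent
    _ ≤ ENNReal.ofReal (exp (p * ∑ e, ((4 / 3 : ℝ) ^ endpointsIn T e - 1)) / (4 / 3) ^ t) := by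
      rw [← hp]
      exact pi_bernoulli_weighted_sum_ge_le _ _ _ (by norm_num) _ _
    _ ≤ ENNReal.ofReal (exp (-(b / 10))) := by
      refine ENNReal.ofReal_le_ofReal ((div_le_iff₀ (by positivity)).2 ?_)
      calc exp (p * ∑ e, ((4 / 3 : ℝ) ^ endpointsIn T e - 1))
          ≤ exp (-(b / 10)) * exp (b / 2) := by
            rw [← exp_add]
            exact exp_le_exp.2 (by linarith)
        _ ≤ exp (-(b / 10)) * (4 / 3) ^ t := by gcongr

lemma exists_mul_log_le (C : ℝ) : ∃ N : ℕ, ∀ n : ℕ, N ≤ n → C * log n ≤ n := by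
  have hc : (0 : ℝ) < 1 / (|C| + 1) := by positivity
  have hlog := tendsto_natCast_atTop_atTop.eventually (isLittleO_log_id_atTop.bound hc)
  obtain ⟨N, hN⟩ := Filter.eventually_atTop.1 hlog
  refine ⟨N, fun n hn ↦ ?_⟩
  have h := hN n hn
  rw [norm_eq_abs, id, norm_eq_abs, Nat.abs_cast] at h
  calc C * log n ≤ |C| * |log n| := (le_abs_self _).trans (abs_mul C _).le
    _ ≤ (|C| + 1) * (1 / (|C| + 1) * n) := by gcongr; linarith
    _ = n := by field_simp

lemma exists_two_pow_mul_exp_le_rpow_neg (C : ℝ) :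
    ∃ N : ℕ, ∀ n : ℕ, N ≤ n → (2 : ℝ) ^ n * exp (-(4 * (n - 1))) ≤ (n : ℝ) ^ (-C) := by
  obtain ⟨N, hN⟩ := exists_mul_log_le C
  refine ⟨max N 2, fun n hn ↦ ?_⟩
  have hn2 : (2 : ℝ) ≤ n := by exact_mod_cast le_of_max_le_right hn
  have hlog := hN n (le_of_max_le_left hn)
  have htwo : (2 : ℝ) ^ n ≤ exp n := by
    rw [← exp_one_pow]
    gcongr
    linarith [add_one_le_exp 1]
  calc (2 : ℝ) ^ n * exp (-(4 * (n - 1))) ≤ exp n * exp (-(4 * (n - 1))) := by gcongr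
    _ ≤ exp (log n * -C) := by
      rw [← exp_add]
      exact exp_le_exp.2 (by linarith)
    _ = (n : ℝ) ^ (-C) := (rpow_def_of_pos (by linarith) _).symm

attribute [local instance] Classical.propDecidable

lemma erMeasure_le_card_filter_deg_gt_le {n : ℕ} {d : ℝ} (hd : 0 ≤ d) (hdn : d ≤ n) (m : ℕ) :
    erMeasure n d {ω | m ≤ (univ.filter fun i : Fin n ↦ 2 * (1 - 1 / n) * d < deg ω i).card} ≤
      ENNReal.ofReal (2 ^ n * exp (-(d / n * m * (n - 1) / 10))) := by
  have hcover : {ω | m ≤ (univ.filter fun i : Fin n ↦ 2 * (1 - 1 / n) * d < deg ω i).card} ⊆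
      ⋃ T ∈ powersetCard m univ, {ω | ∀ i ∈ T, 2 * (1 - 1 / n) * d < deg ω i} := by
    intro ω hω
    obtain ⟨T, hT, hcard⟩ := exists_subset_card_eq hω
    exact Set.mem_biUnion (mem_powersetCard_univ.2 hcard) fun i hi ↦ (mem_filter.1 (hT hi)).2
  calc _ ≤ ∑ T ∈ powersetCard m univ,
        erMeasure n d {ω | ∀ i ∈ T, 2 * (1 - 1 / n) * d < deg ω i} :=
        (measure_mono hcover).trans (measure_biUnion_finset_le _ _)
    _ ≤ ∑ _T ∈ powersetCard m (univ : Finset (Fin n)),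
        ENNReal.ofReal (exp (-(d / n * m * (n - 1) / 10))) := by
      refine sum_le_sum fun T hT ↦ ?_
      rw [← (mem_powersetCard_univ.1 hT)]
      exact erMeasure_forall_mem_deg_gt_le hd hdn T
    _ ≤ ENNReal.ofReal (2 ^ n * exp (-(d / n * m * (n - 1) / 10))) := by
      rw [sum_const, card_powersetCard, card_univ, Fintype.card_fin, nsmul_eq_mul,
        ENNReal.ofReal_mul (by positivity), ENNReal.ofReal_pow zero_le_two, ENNReal.ofReal_ofNat]
      gcongr
      exact_mod_cast Nat.choose_le_two_pow n m

lemma erMeasure_forty_mul_div_lt_card_filter_deg_gt_le {n : ℕ} {d : ℝ} (hd : 0 < d)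
    (hdn : d ≤ n) :
    erMeasure n d {ω | 40 * n / d <
        ((univ.filter fun i : Fin n ↦ 2 * (1 - 1 / n) * d < deg ω i).card : ℝ)} ≤
      ENNReal.ofReal (2 ^ n * exp (-(4 * (n - 1)))) := by
  set m := ⌊40 * n / d⌋₊ + 1
  have hn0 : (0 : ℝ) < n := hd.trans_le hdn
  have hn1 : (1 : ℝ) ≤ n := Nat.one_le_cast.2 (Nat.cast_pos.1 hn0)
  have hm : 40 ≤ d / n * m := by
    have h := Nat.lt_floor_add_one (40 * n / d)
    rw [div_lt_iff₀ hd] at h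
    rw [div_mul_eq_mul_div, le_div_iff₀ hn0]
    push_cast [m]
    linarith
  refine (measure_mono fun ω hω ↦ (Nat.floor_lt (by positivity)).2 hω).trans
    ((erMeasure_le_card_filter_deg_gt_le hd.le hdn m).trans (ENNReal.ofReal_le_ofReal ?_))
  gcongr
  linarith [mul_le_mul_of_nonneg_right hm (sub_nonneg.2 hn1)]

/-- Lemma C.5 (number of high-degree vertices). -/
theorem high_degree_vertices :
    ∀ C : ℝ, 0 < C →
    ∃ (C' : ℝ) (n₀ : ℕ), 0 < C' ∧
      ∀ n : ℕ, n₀ ≤ n →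
      ∀ d : ℝ, 0 < d → d ≤ n →
        erMeasure n d
            {ω | ((Finset.univ.filter fun i : Fin n =>
                2 * (1 - 1 / n) * d < deg ω i).card : ℝ) ≤ C' * n / d} ≥
          ENNReal.ofReal (1 - (n : ℝ) ^ (-C)) := by
  intro C _
  obtain ⟨N, hN⟩ := exists_two_pow_mul_exp_le_rpow_neg C
  refine ⟨40, N, by norm_num, fun n hn d hd hdn ↦ ?_⟩
  have hbad := (erMeasure_forty_mul_div_lt_card_filter_deg_gt_le hd hdn).trans
    (ENNReal.ofReal_le_ofReal (hN n hn))
  rw [ge_iff_le, ← compl_compl {ω | _ ≤ _}, prob_compl_eq_one_sub (Set.toFinite _).measurableSet,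
    ENNReal.ofReal_sub _ (by positivity), ENNReal.ofReal_one, Set.compl_setOf]
  simp only [not_le]
  exact tsub_le_tsub_left hbad 1

end ER
end
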